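/- (i) For every (p,v) ∈ A and every b ∈ ℝⁿ, the maps e ↦ T^{(p,v)}_b e and e ↦ A^{(p,v)}_b e are skew-adjoint with respect to g_{(p,v)} (i.e. g_{(p,v)}(T^{(p,v)}_b e, h) = −g_{(p,v)}(e, T^{(p,v)}_b h) and likewise for A), and both map vectors of 𝒱 to g_{(p,v)}-horizontal vectors and g_{(p,v)}-horizontal vectors to vectors of 𝒱. (ii) If v ∈ 𝒱, then T^{(p,v)}_u w = T^{(p,v)}_w u for all u, w ∈ 𝒱. -/

import Mathlib

open Filter Topology


/-- A pseudo-Finsler metric in a chart: an open set `Ω ⊆ E`, an open set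
`A ⊆ Ω × (E ∖ {0})` with conic fibers, a smooth positively `2`-homogeneous `L` on `A`
and its fundamental tensor `g`, given by the second fiber derivative of `L`, required
to be symmetric and nondegenerate at every point of `A`. -/
structure PseudoFinslerChart (E : Type*) [NormedAddCommGroup E] [NormedSpace ℝ E] where
  Ω : Set E
  A : Set (E × E)
  L : E × E → ℝ
  g : E × E → E →ₗ[ℝ] E →ₗ[ℝ] ℝ
  Ω_open : IsOpen Ω
  A_open : IsOpen A
  A_sub : ∀ pv ∈ A, pv.1 ∈ Ω ∧ pv.2 ≠ 0
  A_cone : ∀ pv ∈ A, ∀ c : ℝ, 0 < c → (pv.1, c • pv.2) ∈ A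
  L_smooth : ContDiffOn ℝ (⊤ : ℕ∞) L A
  L_homog : ∀ pv ∈ A, ∀ c : ℝ, 0 < c → L (pv.1, c • pv.2) = c ^ 2 * L pv
  g_def : ∀ pv ∈ A, ∀ e h : E,
    g pv e h = (1 / 2) * deriv (fun s : ℝ =>
      deriv (fun t : ℝ => L (pv.1, pv.2 + s • e + t • h)) 0) 0
  g_symm : ∀ pv ∈ A, ∀ e h : E, g pv e h = g pv h e
  g_nondeg : ∀ pv ∈ A, ∀ e : E, (∀ h : E, g pv e h = 0) → e = 0

/-- The Cartan tensor of a pseudo-Finsler metric in a chart. -/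
noncomputable def PseudoFinslerChart.Cartan {E : Type*} [NormedAddCommGroup E]
    [NormedSpace ℝ E] (F : PseudoFinslerChart E) (pv : E × E) (b e h : E) : ℝ :=
  (1 / 4) * deriv (fun r : ℝ => deriv (fun s : ℝ =>
    deriv (fun t : ℝ => F.L (pv.1, pv.2 + r • b + s • e + t • h)) 0) 0) 0

/-- The fiber derivative `(∂̇𝒳)_{(p,v)}(h) = d/dt|₀ 𝒳(p, v + t h)` of an anisotropic
vector field. -/
noncomputable def fiberDeriv {E : Type*} [NormedAddCommGroup E] [NormedSpace ℝ E]
    (𝒳 : E × E → E) (pv : E × E) (h : E) : E :=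
  deriv (fun t : ℝ => 𝒳 (pv.1, pv.2 + t • h)) 0

/-- The covariant derivative `∇^{(p,v)}_e 𝒳` of an anisotropic vector field with respect
to an anisotropic connection `Γ`. -/
noncomputable def covDeriv {E : Type*} [NormedAddCommGroup E] [NormedSpace ℝ E]
    (Γ : E × E → E →ₗ[ℝ] E →ₗ[ℝ] E) (𝒳 : E × E → E) (pv : E × E) (e : E) : E :=
  fderiv ℝ (fun q => 𝒳 (q, pv.2)) pv.1 e + Γ pv e (𝒳 pv)
    - fiberDeriv 𝒳 pv (Γ pv e pv.2)

/-- The vertical derivative `P_{(p,v)}(e,h,b) = d/dt|₀ Γ_{(p,v+tb)}(e,h)` of an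
anisotropic connection. -/
noncomputable def vertDeriv {E : Type*} [NormedAddCommGroup E] [NormedSpace ℝ E]
    (Γ : E × E → E →ₗ[ℝ] E →ₗ[ℝ] E) (pv : E × E) (e h b : E) : E :=
  deriv (fun t : ℝ => Γ (pv.1, pv.2 + t • b) e h) 0

/-- The tensor `χ^{(p,v)}_b e = (∇^{(p,v)}_b E^⊥)^⊤ + (∇^{(p,v)}_b E^⊤)^⊥`, where
`E^⊤ : (q,u) ↦ e^⊤_{(q,u)}` and `E^⊥ : (q,u) ↦ e^⊥_{(q,u)}` are the vertical and
horizontal parts of `e`, `top` denoting the vertical projection and `x - top x`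
the horizontal one. -/
noncomputable def chiTen {E : Type*} [NormedAddCommGroup E] [NormedSpace ℝ E]
    (Γ : E × E → E →ₗ[ℝ] E →ₗ[ℝ] E) (top : E × E → E → E)
    (pv : E × E) (b e : E) : E :=
  top pv (covDeriv Γ (fun qu => e - top qu e) pv b)
    + (covDeriv Γ (fun qu => top qu e) pv b - top pv (covDeriv Γ (fun qu => top qu e) pv b))

/-- The O'Neill tensor `T^{(p,v)}_b e = χ^{(p,v)}_{b^⊤} e`. -/
noncomputable def oneillT {E : Type*} [NormedAddCommGroup E] [NormedSpace ℝ E]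
    (Γ : E × E → E →ₗ[ℝ] E →ₗ[ℝ] E) (top : E × E → E → E)
    (pv : E × E) (b e : E) : E :=
  chiTen Γ top pv (top pv b) e

/-- The O'Neill tensor `A^{(p,v)}_b e = χ^{(p,v)}_{b^⊥} e`. -/
noncomputable def oneillA {E : Type*} [NormedAddCommGroup E] [NormedSpace ℝ E]
    (Γ : E × E → E →ₗ[ℝ] E →ₗ[ℝ] E) (top : E × E → E → E)
    (pv : E × E) (b e : E) : E :=
  chiTen Γ top pv (b - top pv b) e

section Aux
variable {E : Type*} [NormedAddCommGroup E] [NormedSpace ℝ E]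
variable {F' : Type*} [NormedAddCommGroup F'] [NormedSpace ℝ F']

theorem hasDerivAt_line {f : E → F'} {x : E} (hf : DifferentiableAt ℝ f x) (h : E) :
    HasDerivAt (fun t : ℝ => f (x + t • h)) (fderiv ℝ f x h) 0 := by
  have h1 : HasDerivAt (fun t : ℝ => x + t • h) h 0 := by
    simpa using ((hasDerivAt_id (0:ℝ)).smul_const h).const_add x
  have h2 : HasFDerivAt f (fderiv ℝ f x) ((fun t : ℝ => x + t • h) 0) := by
    simpa using hf.hasFDerivAt
  exact h2.comp_hasDerivAt (0:ℝ) h1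

theorem deriv_line {f : E → F'} {x : E} (hf : DifferentiableAt ℝ f x) (h : E) :
    deriv (fun t : ℝ => f (x + t • h)) 0 = fderiv ℝ f x h :=
  (hasDerivAt_line hf h).deriv

theorem contDiffOn_open_diffAt {f : E → F'} {A : Set E} (hf : ContDiffOn ℝ (⊤:ℕ∞) f A)
    (hA : IsOpen A) {x : E} (hx : x ∈ A) : DifferentiableAt ℝ f x :=
  (hf.contDiffAt (hA.mem_nhds hx)).differentiableAt (by simp)

theorem contDiffOn_fderiv_apply {f : E → F'} {A : Set E} (hf : ContDiffOn ℝ (⊤:ℕ∞) f A)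
    (hA : IsOpen A) (w : E) : ContDiffOn ℝ (⊤:ℕ∞) (fun x => fderiv ℝ f x w) A :=
  (hf.fderiv_of_isOpen hA (by simp)).clm_apply contDiffOn_const

theorem line2_eq (pv : E × E) (h : E) (t : ℝ) :
    pv + t • ((0:E), h) = (pv.1, pv.2 + t • h) := by
  ext <;> simp

theorem eventually_line_mem {A : Set (E × E)} (hA : IsOpen A) {pv : E × E} (hpv : pv ∈ A)
    (h : E) : ∀ᶠ t : ℝ in 𝓝 0, (pv.1, pv.2 + t • h) ∈ A := by
  have hc : ContinuousAt (fun t : ℝ => ((pv.1 : E), pv.2 + t • h)) 0 := by fun_prop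
  have := hc.eventually_mem (by simpa using hA.mem_nhds hpv)
  simpa using this

end Aux

namespace PseudoFinslerChart
variable {E : Type*} [NormedAddCommGroup E] [NormedSpace ℝ E] (F : PseudoFinslerChart E)

/-- first fiber derivative of L as a function of the base point -/
noncomputable def L1 (h : E) : E × E → ℝ := fun x => fderiv ℝ F.L x ((0:E), h)

theorem L1_contDiffOn (h : E) : ContDiffOn ℝ (⊤:ℕ∞) (F.L1 h) F.A :=
  contDiffOn_fderiv_apply F.L_smooth F.A_open _

theorem inner_deriv_eq {x : E × E} (hx : x ∈ F.A) (h : E) :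
    deriv (fun t : ℝ => F.L (x.1, x.2 + t • h)) 0 = F.L1 h x := by
  have hd : DifferentiableAt ℝ F.L x := contDiffOn_open_diffAt F.L_smooth F.A_open hx
  have := deriv_line hd ((0:E), h)
  simp only [line2_eq] at this
  exact this

theorem g_eq_on {pv : E × E} (hpv : pv ∈ F.A) (e h : E) :
    F.g pv e h = (1/2) * fderiv ℝ (F.L1 h) pv ((0:E), e) := by
  rw [F.g_def pv hpv e h]
  congr 1
  have hev : ∀ᶠ s : ℝ in 𝓝 0, (pv.1, pv.2 + s • e) ∈ F.A :=
    eventually_line_mem F.A_open hpv e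
  have heq : (fun s : ℝ => deriv (fun t : ℝ => F.L (pv.1, pv.2 + s • e + t • h)) 0)
      =ᶠ[𝓝 (0:ℝ)] fun s : ℝ => F.L1 h (pv + s • ((0:E), e)) := by
    filter_upwards [hev] with s hs
    rw [line2_eq]
    exact F.inner_deriv_eq hs h
  rw [heq.deriv_eq]
  exact deriv_line (contDiffOn_open_diffAt (F.L1_contDiffOn h) F.A_open hpv) _

theorem g_contDiffOn (e h : E) : ContDiffOn ℝ (⊤:ℕ∞) (fun pv => F.g pv e h) F.A := by
  refine (ContDiffOn.mul (contDiffOn_const (c := (1/2 : ℝ)))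
    (contDiffOn_fderiv_apply (F.L1_contDiffOn h) F.A_open ((0:E), e))).congr ?_
  exact fun pv hpv => F.g_eq_on hpv e h

end PseudoFinslerChart
section Aux2
variable {G : Type*} [NormedAddCommGroup G] [NormedSpace ℝ G]

theorem iterated_line_deriv {Φ : G → ℝ} {U : Set G} (hU : IsOpen U) (h0 : (0:G) ∈ U)
    (hΦ : ContDiffOn ℝ (⊤:ℕ∞) Φ U) (v w : G) :
    deriv (fun r : ℝ => deriv (fun s : ℝ => Φ (r • v + s • w)) 0) 0
      = fderiv ℝ (fun x => fderiv ℝ Φ x w) 0 v := by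
  have hc : ContinuousAt (fun r : ℝ => r • v) 0 := by fun_prop
  have hev : ∀ᶠ r : ℝ in 𝓝 0, r • v ∈ U := hc.eventually_mem (by simpa using hU.mem_nhds h0)
  have heq : (fun r : ℝ => deriv (fun s : ℝ => Φ (r • v + s • w)) 0)
      =ᶠ[𝓝 (0:ℝ)] fun r : ℝ => (fun x => fderiv ℝ Φ x w) ((0:G) + r • v) := by
    filter_upwards [hev] with r hr
    simp only [zero_add]
    exact deriv_line (contDiffOn_open_diffAt hΦ hU hr) w
  rw [heq.deriv_eq]
  exact deriv_line (contDiffOn_open_diffAt (contDiffOn_fderiv_apply hΦ hU w) hU h0) v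

theorem fderiv2_symm {Φ : G → ℝ} {U : Set G} (hU : IsOpen U) (h0 : (0:G) ∈ U)
    (hΦ : ContDiffOn ℝ (⊤:ℕ∞) Φ U) (v w : G) :
    fderiv ℝ (fun x => fderiv ℝ Φ x w) 0 v = fderiv ℝ (fun x => fderiv ℝ Φ x v) 0 w := by
  have hdiff : ∀ᶠ y in 𝓝 (0:G), HasFDerivAt Φ (fderiv ℝ Φ y) y := by
    filter_upwards [hU.mem_nhds h0] with y hy
    exact (contDiffOn_open_diffAt hΦ hU hy).hasFDerivAt
  have hd2 : DifferentiableAt ℝ (fderiv ℝ Φ) 0 :=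
    contDiffOn_open_diffAt (hΦ.fderiv_of_isOpen hU (by simp)) hU h0
  have hsymm := second_derivative_symmetric_of_eventually hdiff hd2.hasFDerivAt v w
  have h1 : ∀ u z : G, fderiv ℝ (fun x => fderiv ℝ Φ x u) 0 z
      = fderiv ℝ (fderiv ℝ Φ) 0 z u := by
    intro u z
    have : (fun x => fderiv ℝ Φ x u) = fun x => (fderiv ℝ Φ x) ((fun _ => u) x) := rfl
    rw [this, fderiv_clm_apply hd2 (differentiableAt_const u)]
    simp
  rw [h1 w v, h1 v w]
  exact hsymm

end Aux2

namespace PseudoFinslerChart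
variable {E : Type*} [NormedAddCommGroup E] [NormedSpace ℝ E] (F : PseudoFinslerChart E)

theorem cartan_deriv {pv : E × E} (hpv : pv ∈ F.A) (b e h : E) :
    deriv (fun r : ℝ => F.g (pv.1, pv.2 + r • b) e h) 0 = 2 * F.Cartan pv b e h := by
  have hev := eventually_line_mem F.A_open hpv b
  have heq : (fun r : ℝ => F.g (pv.1, pv.2 + r • b) e h) =ᶠ[𝓝 (0:ℝ)]
      fun r : ℝ => (1/2) * deriv (fun s : ℝ =>
        deriv (fun t : ℝ => F.L (pv.1, pv.2 + r • b + s • e + t • h)) 0) 0 := by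
    filter_upwards [hev] with r hr
    exact F.g_def _ hr e h
  rw [heq.deriv_eq, deriv_const_mul_field]
  show (1/2) * deriv _ 0 = 2 * ((1/4) * deriv _ 0)
  ring

theorem cartan_symm23 {pv : E × E} (hpv : pv ∈ F.A) (b e h : E) :
    F.Cartan pv b e h = F.Cartan pv b h e := by
  have h1 := F.cartan_deriv hpv b e h
  have h2 := F.cartan_deriv hpv b h e
  have heq : (fun r : ℝ => F.g (pv.1, pv.2 + r • b) e h) =ᶠ[𝓝 (0:ℝ)]
      fun r : ℝ => F.g (pv.1, pv.2 + r • b) h e := by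
    filter_upwards [eventually_line_mem F.A_open hpv b] with r hr
    exact F.g_symm _ hr e h
  rw [heq.deriv_eq, h2] at h1
  linarith

theorem cartan_symm12 {pv : E × E} (hpv : pv ∈ F.A) (b e h : E) :
    F.Cartan pv b e h = F.Cartan pv e b h := by
  set Φ : E × E → ℝ := fun x => F.L1 h (pv + x) with hΦdef
  set U : Set (E × E) := (fun x : E × E => pv + x) ⁻¹' F.A with hUdef
  have hU : IsOpen U := F.A_open.preimage (by fun_prop)
  have h0 : (0 : E × E) ∈ U := by simpa [hUdef] using hpv
  have hΦ : ContDiffOn ℝ (⊤:ℕ∞) Φ U := by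
    apply (F.L1_contDiffOn h).comp ((contDiff_const.add contDiff_id).contDiffOn)
    exact fun x hx => hx
  have key : ∀ b' e' : E, F.Cartan pv b' e' h
      = (1/4) * fderiv ℝ (fun x => fderiv ℝ Φ x ((0:E), e')) 0 ((0:E), b') := by
    intro b' e'
    show (1/4) * _ = _
    congr 1
    have hstep : (fun r : ℝ => deriv (fun s : ℝ =>
          deriv (fun t : ℝ => F.L (pv.1, pv.2 + r • b' + s • e' + t • h)) 0) 0)
        =ᶠ[𝓝 (0:ℝ)] fun r : ℝ =>
          deriv (fun s : ℝ => Φ (r • ((0:E), b') + s • ((0:E), e'))) 0 := by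
      filter_upwards [eventually_line_mem F.A_open hpv b'] with r hr
      have hev2 : ∀ᶠ s : ℝ in 𝓝 0, (pv.1, pv.2 + r • b' + s • e') ∈ F.A := by
        have := eventually_line_mem F.A_open hr e'
        simpa using this
      have heq2 : (fun s : ℝ =>
            deriv (fun t : ℝ => F.L (pv.1, pv.2 + r • b' + s • e' + t • h)) 0)
          =ᶠ[𝓝 (0:ℝ)] fun s : ℝ => Φ (r • ((0:E), b') + s • ((0:E), e')) := by
        filter_upwards [hev2] with s hs
        have hpt : pv + (r • ((0:E), b') + s • ((0:E), e'))
            = (pv.1, pv.2 + r • b' + s • e') := by ext <;> simp [add_assoc]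
        have := F.inner_deriv_eq hs h
        rw [hΦdef]
        simp only [hpt]
        exact this
      exact heq2.deriv_eq
    rw [hstep.deriv_eq]
    exact iterated_line_deriv hU h0 hΦ _ _
  rw [key b e, key e b, fderiv2_symm hU h0 hΦ]

theorem cartan_rot {pv : E × E} (hpv : pv ∈ F.A) (b e h : E) :
    F.Cartan pv b e h = F.Cartan pv e h b :=
  (F.cartan_symm12 hpv b e h).trans (F.cartan_symm23 hpv e b h)

end PseudoFinslerChart

section Bilin
variable {E : Type*} [NormedAddCommGroup E] [NormedSpace ℝ E]
variable {E' : Type*} [NormedAddCommGroup E'] [NormedSpace ℝ E']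

theorem fderiv_bilin_entry {B : E' → (E →L[ℝ] E →L[ℝ] ℝ)} {x₀ : E'}
    (hB : DifferentiableAt ℝ B x₀) (a b : E) (c : E') :
    fderiv ℝ (fun q => B q a b) x₀ c = (fderiv ℝ B x₀ c) a b := by
  have h1 : fderiv ℝ (fun q => B q a) x₀ = (fderiv ℝ B x₀).flip a := by
    rw [show (fun q => B q a) = fun q => (B q) ((fun _ => a) q) from rfl,
      fderiv_clm_apply hB (differentiableAt_const a)]
    ext c'; simp
  have hBa : DifferentiableAt ℝ (fun q => B q a) x₀ := hB.clm_apply (differentiableAt_const a)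
  rw [show (fun q => B q a b) = fun q => ((fun q' => B q' a) q) ((fun _ => b) q) from rfl,
    fderiv_clm_apply hBa (differentiableAt_const b)]
  simp [h1]

theorem deriv_bilin_entry {B : ℝ → (E →L[ℝ] E →L[ℝ] ℝ)} {t₀ : ℝ}
    (hB : DifferentiableAt ℝ B t₀) (a b : E) :
    deriv (fun t => B t a b) t₀ = (deriv B t₀) a b := by
  have hBa : DifferentiableAt ℝ (fun t => B t a) t₀ := hB.clm_apply (differentiableAt_const a)
  have h1 : deriv (fun t => B t a) t₀ = (deriv B t₀) a := by
    rw [show (fun t => B t a) = fun t => (B t) ((fun _ => a) t) from rfl,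
      deriv_clm_apply hB (differentiableAt_const a)]
    simp
  rw [show (fun t => B t a b) = fun t => ((fun t' => B t' a) t) ((fun _ => b) t) from rfl,
    deriv_clm_apply hBa (differentiableAt_const b)]
  simp [h1]

theorem fderiv_bilin_apply {B : E' → (E →L[ℝ] E →L[ℝ] ℝ)} {x₀ : E'}
    (hB : DifferentiableAt ℝ B x₀) {x y : E' → E}
    (hx : DifferentiableAt ℝ x x₀) (hy : DifferentiableAt ℝ y x₀) (c : E') :
    fderiv ℝ (fun q => B q (x q) (y q)) x₀ c
      = (fderiv ℝ B x₀ c) (x x₀) (y x₀) + B x₀ (fderiv ℝ x x₀ c) (y x₀)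
        + B x₀ (x x₀) (fderiv ℝ y x₀ c) := by
  rw [show (fun q => B q (x q) (y q)) = fun q => ((fun q' => B q' (x q')) q) (y q) from rfl,
    fderiv_clm_apply (hB.clm_apply hx) hy]
  simp only [ContinuousLinearMap.add_apply, ContinuousLinearMap.coe_comp', Function.comp_apply,
    ContinuousLinearMap.flip_apply]
  rw [fderiv_clm_apply hB hx]
  simp only [ContinuousLinearMap.add_apply, ContinuousLinearMap.coe_comp', Function.comp_apply,
    ContinuousLinearMap.flip_apply]
  ring

theorem deriv_bilin_apply {B : ℝ → (E →L[ℝ] E →L[ℝ] ℝ)} {t₀ : ℝ}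
    (hB : DifferentiableAt ℝ B t₀) {x y : ℝ → E}
    (hx : DifferentiableAt ℝ x t₀) (hy : DifferentiableAt ℝ y t₀) :
    deriv (fun t => B t (x t) (y t)) t₀
      = (deriv B t₀) (x t₀) (y t₀) + B t₀ (deriv x t₀) (y t₀)
        + B t₀ (x t₀) (deriv y t₀) := by
  rw [show (fun t => B t (x t) (y t)) = fun t => ((fun t' => B t' (x t')) t) (y t) from rfl,
    deriv_clm_apply (hB.clm_apply hx) hy]
  rw [deriv_clm_apply hB hx]
  simp only [ContinuousLinearMap.add_apply]

end Bilin

section CompHelpers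
variable {E : Type*} [NormedAddCommGroup E] [NormedSpace ℝ E]
variable {F' : Type*} [NormedAddCommGroup F'] [NormedSpace ℝ F']

theorem diffAt_comp_base {f : E × E → F'} {pv : E × E} (hf : DifferentiableAt ℝ f pv) :
    DifferentiableAt ℝ (fun q : E => f (q, pv.2)) pv.1 := by
  have hg : DifferentiableAt ℝ (fun q : E => ((q, pv.2) : E × E)) pv.1 :=
    differentiableAt_id.prodMk (differentiableAt_const _)
  have : DifferentiableAt ℝ f ((fun q : E => ((q, pv.2) : E × E)) pv.1) := by
    simpa using hf
  exact this.comp pv.1 hg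

theorem diffAt_comp_fiber {f : E × E → F'} {pv : E × E} (hf : DifferentiableAt ℝ f pv)
    (z : E) : DifferentiableAt ℝ (fun t : ℝ => f (pv.1, pv.2 + t • z)) 0 := by
  have hg : DifferentiableAt ℝ (fun t : ℝ => ((pv.1, pv.2 + t • z) : E × E)) 0 :=
    (differentiableAt_const _).prodMk
      ((differentiableAt_const _).add (differentiableAt_id.smul_const z))
  have : DifferentiableAt ℝ f ((fun t : ℝ => ((pv.1, pv.2 + t • z) : E × E)) 0) := by
    simpa using hf
  exact this.comp (0:ℝ) hg

end CompHelpers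

namespace PseudoFinslerChart
variable {E : Type*} [NormedAddCommGroup E] [NormedSpace ℝ E] [FiniteDimensional ℝ E]
  (F : PseudoFinslerChart E)

/-- the fundamental tensor as continuous bilinear map -/
noncomputable def gC (qu : E × E) : E →L[ℝ] E →L[ℝ] ℝ :=
  LinearMap.toContinuousLinearMap
    (((LinearMap.toContinuousLinearMap : (E →ₗ[ℝ] ℝ) ≃ₗ[ℝ] (E →L[ℝ] ℝ)) :
        (E →ₗ[ℝ] ℝ) →ₗ[ℝ] (E →L[ℝ] ℝ)).comp (F.g qu))

@[simp] theorem gC_apply (qu : E × E) (e h : E) : F.gC qu e h = F.g qu e h := by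
  simp [gC]

theorem gC_contDiffOn : ContDiffOn ℝ (⊤:ℕ∞) F.gC F.A := by
  classical
  set b := Module.finBasis ℝ E with hb
  have hrepr : ∀ qu : E × E, F.gC qu
      = ∑ i : Fin (Module.finrank ℝ E), ∑ j : Fin (Module.finrank ℝ E),
        (F.g qu (b i) (b j)) •
          ((b.coord i).toContinuousLinearMap.smulRight (b.coord j).toContinuousLinearMap) := by
    intro qu
    ext e h
    simp only [ContinuousLinearMap.sum_apply, ContinuousLinearMap.smul_apply,
      ContinuousLinearMap.smulRight_apply, LinearMap.coe_toContinuousLinearMap,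
      gC_apply, smul_eq_mul, Module.Basis.coord_apply]
    conv_lhs => rw [← b.sum_repr e]
    rw [map_sum, LinearMap.sum_apply]
    refine Finset.sum_congr rfl fun i _ => ?_
    rw [map_smul, LinearMap.smul_apply, smul_eq_mul]
    conv_lhs => rw [← b.sum_repr h, map_sum]
    rw [Finset.mul_sum]
    refine Finset.sum_congr rfl fun j _ => ?_
    rw [map_smul, smul_eq_mul]
    simp only [LinearMap.coe_toContinuousLinearMap', Module.Basis.coord_apply]
    ring
  have : ContDiffOn ℝ (⊤:ℕ∞) (fun qu => ∑ i : Fin (Module.finrank ℝ E),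
      ∑ j : Fin (Module.finrank ℝ E), (F.g qu (b i) (b j)) •
        ((b.coord i).toContinuousLinearMap.smulRight (b.coord j).toContinuousLinearMap)) F.A := by
    apply ContDiffOn.sum; intro i _
    apply ContDiffOn.sum; intro j _
    exact ((ContinuousLinearMap.smulRight (1 : ℝ →L[ℝ] ℝ)
      ((b.coord i).toContinuousLinearMap.smulRight (b.coord j).toContinuousLinearMap)).contDiff.comp_contDiffOn
      (F.g_contDiffOn (b i) (b j))).congr (fun x _ => by simp)
  exact this.congr fun qu _ => hrepr qu

theorem gC_diffAt {pv : E × E} (hpv : pv ∈ F.A) : DifferentiableAt ℝ F.gC pv :=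
  contDiffOn_open_diffAt F.gC_contDiffOn F.A_open hpv

end PseudoFinslerChart

namespace PseudoFinslerChart
variable {E : Type*} [NormedAddCommGroup E] [NormedSpace ℝ E] [FiniteDimensional ℝ E]
  (F : PseudoFinslerChart E)

theorem metric_compat (Γ : E × E → E →ₗ[ℝ] E →ₗ[ℝ] E)
    (hΓcompat : ∀ pv ∈ F.A, ∀ e h b : E,
      fderiv ℝ (fun q => F.g (q, pv.2) h b) pv.1 e
        = F.g pv (Γ pv e h) b + F.g pv h (Γ pv e b) + 2 * F.Cartan pv h b (Γ pv e pv.2))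
    {pv : E × E} (hpv : pv ∈ F.A) (X Y : E × E → E) (c : E)
    (hX1 : DifferentiableAt ℝ (fun q => X (q, pv.2)) pv.1)
    (hX2 : DifferentiableAt ℝ (fun t : ℝ => X (pv.1, pv.2 + t • (Γ pv c pv.2))) 0)
    (hY1 : DifferentiableAt ℝ (fun q => Y (q, pv.2)) pv.1)
    (hY2 : DifferentiableAt ℝ (fun t : ℝ => Y (pv.1, pv.2 + t • (Γ pv c pv.2))) 0) :
    F.g pv (covDeriv Γ X pv c) (Y pv) + F.g pv (X pv) (covDeriv Γ Y pv c)
      = fderiv ℝ (fun q => F.g (q, pv.2) (X (q, pv.2)) (Y (q, pv.2))) pv.1 c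
        - deriv (fun t : ℝ => F.g (pv.1, pv.2 + t • (Γ pv c pv.2))
            (X (pv.1, pv.2 + t • (Γ pv c pv.2))) (Y (pv.1, pv.2 + t • (Γ pv c pv.2)))) 0 := by
  set z := Γ pv c pv.2 with hzdef
  set x1 := fderiv ℝ (fun q => X (q, pv.2)) pv.1 c with hx1
  set y1 := fderiv ℝ (fun q => Y (q, pv.2)) pv.1 c with hy1
  set x2 := deriv (fun t : ℝ => X (pv.1, pv.2 + t • z)) 0 with hx2d
  set y2 := deriv (fun t : ℝ => Y (pv.1, pv.2 + t • z)) 0 with hy2d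
  have hBb : DifferentiableAt ℝ (fun q : E => F.gC (q, pv.2)) pv.1 :=
    diffAt_comp_base (f := F.gC) (pv := pv) (F.gC_diffAt hpv)
  have hBf : DifferentiableAt ℝ (fun t : ℝ => F.gC (pv.1, pv.2 + t • z)) 0 :=
    diffAt_comp_fiber (f := F.gC) (pv := pv) (F.gC_diffAt hpv) z
  -- base derivative term
  have hD : fderiv ℝ (fun q => F.g (q, pv.2) (X (q, pv.2)) (Y (q, pv.2))) pv.1 c
      = (F.g pv (Γ pv c (X pv)) (Y pv) + F.g pv (X pv) (Γ pv c (Y pv))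
          + 2 * F.Cartan pv (X pv) (Y pv) z)
        + F.g pv x1 (Y pv) + F.g pv (X pv) y1 := by
    have h0 : (fun q => F.g (q, pv.2) (X (q, pv.2)) (Y (q, pv.2)))
        = fun q => F.gC (q, pv.2) (X (q, pv.2)) (Y (q, pv.2)) :=
      funext fun q => (F.gC_apply _ _ _).symm
    rw [h0, fderiv_bilin_apply hBb hX1 hY1 c]
    rw [Prod.mk.eta, ← hx1, ← hy1]
    have hent : (fderiv ℝ (fun q : E => F.gC (q, pv.2)) pv.1 c) (X pv) (Y pv)
        = F.g pv (Γ pv c (X pv)) (Y pv) + F.g pv (X pv) (Γ pv c (Y pv))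
          + 2 * F.Cartan pv (X pv) (Y pv) z := by
      rw [← fderiv_bilin_entry hBb (X pv) (Y pv) c]
      have h1 : (fun q : E => F.gC (q, pv.2) (X pv) (Y pv))
          = fun q : E => F.g (q, pv.2) (X pv) (Y pv) := funext fun q => F.gC_apply _ _ _
      rw [h1, hΓcompat pv hpv c (X pv) (Y pv), ← hzdef]
    rw [hent]
    simp only [gC_apply]
  -- fiber derivative term
  have hF : deriv (fun t : ℝ => F.g (pv.1, pv.2 + t • z)
        (X (pv.1, pv.2 + t • z)) (Y (pv.1, pv.2 + t • z))) 0
      = 2 * F.Cartan pv (X pv) (Y pv) z + F.g pv x2 (Y pv) + F.g pv (X pv) y2 := by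
    have h0 : (fun t : ℝ => F.g (pv.1, pv.2 + t • z)
          (X (pv.1, pv.2 + t • z)) (Y (pv.1, pv.2 + t • z)))
        = fun t : ℝ => F.gC (pv.1, pv.2 + t • z)
          (X (pv.1, pv.2 + t • z)) (Y (pv.1, pv.2 + t • z)) :=
      funext fun t => (F.gC_apply _ _ _).symm
    rw [h0, deriv_bilin_apply hBf hX2 hY2]
    simp only [zero_smul, add_zero, Prod.mk.eta, ← hx2d, ← hy2d]
    have hent : (deriv (fun t : ℝ => F.gC (pv.1, pv.2 + t • z)) 0) (X pv) (Y pv)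
        = 2 * F.Cartan pv (X pv) (Y pv) z := by
      rw [← deriv_bilin_entry hBf (X pv) (Y pv)]
      have h1 : (fun t : ℝ => F.gC (pv.1, pv.2 + t • z) (X pv) (Y pv))
          = fun t : ℝ => F.g (pv.1, pv.2 + t • z) (X pv) (Y pv) :=
        funext fun t => F.gC_apply _ _ _
      rw [h1, F.cartan_deriv hpv z (X pv) (Y pv), F.cartan_rot hpv z (X pv) (Y pv)]
    rw [hent]
    simp only [gC_apply]
  rw [hD, hF]
  show F.g pv (x1 + Γ pv c (X pv) - x2) (Y pv) + F.g pv (X pv) (y1 + Γ pv c (Y pv) - y2) = _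
  simp only [map_add, map_sub, LinearMap.add_apply, LinearMap.sub_apply]
  ring

end PseudoFinslerChart

section Prod'
variable {D : Type*} [NormedAddCommGroup D] [NormedSpace ℝ D]

theorem contDiffOn_finset_prod {ι : Type*} {A : Set D} (s : Finset ι) (f : ι → D → ℝ)
    (h : ∀ i ∈ s, ContDiffOn ℝ (⊤:ℕ∞) (f i) A) :
    ContDiffOn ℝ (⊤:ℕ∞) (fun x => ∏ i ∈ s, f i x) A := by
  classical
  induction s using Finset.induction with
  | empty => simpa using contDiffOn_const
  | insert a s' hni ih =>
    simp only [Finset.prod_insert hni]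
    exact (h a (Finset.mem_insert_self a s')).mul
      (ih fun i hi => h i (Finset.mem_insert_of_mem hi))

theorem contDiffOn_matrix_det {k : ℕ} {A : Set D} (N : D → Matrix (Fin k) (Fin k) ℝ)
    (h : ∀ i j, ContDiffOn ℝ (⊤:ℕ∞) (fun x => N x i j) A) :
    ContDiffOn ℝ (⊤:ℕ∞) (fun x => (N x).det) A := by
  classical
  have : (fun x => (N x).det) = fun x =>
      ∑ σ : Equiv.Perm (Fin k), ((Equiv.Perm.sign σ : ℤ) : ℝ) * ∏ i, N x (σ i) i := by
    funext x; rw [Matrix.det_apply']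
  rw [this]
  apply ContDiffOn.sum; intro σ _
  exact contDiffOn_const.mul (contDiffOn_finset_prod _ _ fun i _ => h (σ i) i)

end Prod'

section TopField
variable {E : Type*} [NormedAddCommGroup E] [NormedSpace ℝ E] [FiniteDimensional ℝ E]

noncomputable def vbasis (𝒱 : Submodule ℝ E) :
    Module.Basis (Fin (Module.finrank ℝ 𝒱)) ℝ 𝒱 := Module.finBasis ℝ 𝒱

noncomputable def wv (𝒱 : Submodule ℝ E) (i : Fin (Module.finrank ℝ 𝒱)) : E :=
  (vbasis 𝒱 i : E)

theorem wv_mem (𝒱 : Submodule ℝ E) (i) : wv 𝒱 i ∈ 𝒱 := (vbasis 𝒱 i).2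

theorem wv_li (𝒱 : Submodule ℝ E) : LinearIndependent ℝ (wv 𝒱) :=
  (vbasis 𝒱).linearIndependent.map' 𝒱.subtype (Submodule.ker_subtype 𝒱)

/-- expand a vector of `𝒱` in the basis -/
theorem wv_span (𝒱 : Submodule ℝ E) {u : E} (hu : u ∈ 𝒱) :
    ∑ i, ((vbasis 𝒱).repr ⟨u, hu⟩ i) • wv 𝒱 i = u := by
  have := (vbasis 𝒱).sum_repr ⟨u, hu⟩
  have h2 := congrArg (Submodule.subtype 𝒱) this
  simp only [map_sum, map_smul, Submodule.subtype_apply] at h2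
  exact h2

variable (F : PseudoFinslerChart E) (𝒱 : Submodule ℝ E)

noncomputable def gmat (qu : E × E) :
    Matrix (Fin (Module.finrank ℝ 𝒱)) (Fin (Module.finrank ℝ 𝒱)) ℝ :=
  Matrix.of fun i j => F.g qu (wv 𝒱 i) (wv 𝒱 j)

noncomputable def gvec (e : E) (qu : E × E) : Fin (Module.finrank ℝ 𝒱) → ℝ :=
  fun i => F.g qu e (wv 𝒱 i)

noncomputable def topc (qu : E × E) (e : E) : E :=
  ∑ j, (((gmat F 𝒱 qu).det)⁻¹ * Matrix.cramer (gmat F 𝒱 qu) (gvec F 𝒱 e qu) j) • wv 𝒱 j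

/-- vanishing against the basis implies vanishing against `𝒱` -/
theorem perp_of_basis {qu : E × E} {x : E}
    (h : ∀ i, F.g qu x (wv 𝒱 i) = 0) : ∀ u ∈ 𝒱, F.g qu x u = 0 := by
  intro u hu
  rw [← wv_span 𝒱 hu, map_sum]
  simp [h]

variable (hVnd : ∀ pv ∈ F.A, ∀ w ∈ 𝒱, (∀ u ∈ 𝒱, F.g pv w u = 0) → w = 0)
include hVnd

theorem gmat_det_ne {qu : E × E} (hqu : qu ∈ F.A) : (gmat F 𝒱 qu).det ≠ 0 := by
  classical
  intro hdet
  obtain ⟨v, hv0, hv⟩ := (Matrix.exists_mulVec_eq_zero_iff).2 hdet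
  set x : E := ∑ i, v i • wv 𝒱 i with hx
  have hxmem : x ∈ 𝒱 := Submodule.sum_mem _ fun i _ => Submodule.smul_mem _ _ (wv_mem 𝒱 i)
  have hperp : ∀ i, F.g qu x (wv 𝒱 i) = 0 := by
    intro i
    have hmv := congrFun hv i
    have : F.g qu (wv 𝒱 i) x = 0 := by
      rw [hx, map_sum]
      simpa [Matrix.mulVec, dotProduct, gmat, mul_comm] using hmv
    rw [F.g_symm qu hqu x (wv 𝒱 i)]
    exact this
  have hx0 : x = 0 := hVnd qu hqu x hxmem (perp_of_basis F 𝒱 hperp)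
  apply hv0
  have hli := Fintype.linearIndependent_iff.1 (wv_li 𝒱) v (by rw [← hx, hx0])
  funext i; exact hli i

theorem topc_mem (qu : E × E) (e : E) : topc F 𝒱 qu e ∈ 𝒱 :=
  Submodule.sum_mem _ fun j _ => Submodule.smul_mem _ _ (wv_mem 𝒱 j)

theorem topc_perp {qu : E × E} (hqu : qu ∈ F.A) (e : E) :
    ∀ u ∈ 𝒱, F.g qu (e - topc F 𝒱 qu e) u = 0 := by
  classical
  apply perp_of_basis
  intro i
  have hdet := gmat_det_ne F 𝒱 hVnd hqu
  have hsolve : Matrix.mulVec (gmat F 𝒱 qu) (fun j => ((gmat F 𝒱 qu).det)⁻¹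
      * Matrix.cramer (gmat F 𝒱 qu) (gvec F 𝒱 e qu) j) = gvec F 𝒱 e qu := by
    have h1 : (fun j => ((gmat F 𝒱 qu).det)⁻¹
        * Matrix.cramer (gmat F 𝒱 qu) (gvec F 𝒱 e qu) j)
        = ((gmat F 𝒱 qu).det)⁻¹ • Matrix.cramer (gmat F 𝒱 qu) (gvec F 𝒱 e qu) := rfl
    rw [h1, Matrix.mulVec_smul, Matrix.mulVec_cramer, smul_smul, inv_mul_cancel₀ hdet, one_smul]
  have htop : F.g qu (topc F 𝒱 qu e) (wv 𝒱 i) = gvec F 𝒱 e qu i := by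
    have hexp : F.g qu (topc F 𝒱 qu e) (wv 𝒱 i)
        = Matrix.mulVec (gmat F 𝒱 qu) (fun j => ((gmat F 𝒱 qu).det)⁻¹
            * Matrix.cramer (gmat F 𝒱 qu) (gvec F 𝒱 e qu) j) i := by
      rw [topc, map_sum]
      simp only [LinearMap.sum_apply, map_smul, LinearMap.smul_apply, smul_eq_mul,
        Matrix.mulVec, dotProduct]
      refine Finset.sum_congr rfl fun j _ => ?_
      have hsym : F.g qu (wv 𝒱 j) (wv 𝒱 i) = gmat F 𝒱 qu i j := by
        rw [show gmat F 𝒱 qu i j = F.g qu (wv 𝒱 i) (wv 𝒱 j) from rfl]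
        exact F.g_symm qu hqu _ _
      rw [hsym]; ring
    rw [hexp, hsolve]
  rw [map_sub, LinearMap.sub_apply, htop]
  show F.g qu e (wv 𝒱 i) - gvec F 𝒱 e qu i = 0
  rw [show gvec F 𝒱 e qu i = F.g qu e (wv 𝒱 i) from rfl, sub_self]

theorem topc_contDiffOn (e : E) : ContDiffOn ℝ (⊤:ℕ∞) (fun qu => topc F 𝒱 qu e) F.A := by
  classical
  apply ContDiffOn.sum; intro j _
  refine ContDiffOn.smul ?_ contDiffOn_const
  refine ContDiffOn.mul (ContDiffOn.inv ?_ fun qu hqu => gmat_det_ne F 𝒱 hVnd hqu) ?_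
  · exact contDiffOn_matrix_det _ fun i j' => F.g_contDiffOn _ _
  · have : ∀ qu, Matrix.cramer (gmat F 𝒱 qu) (gvec F 𝒱 e qu) j
        = ((gmat F 𝒱 qu).updateCol j (gvec F 𝒱 e qu)).det := fun qu =>
      Matrix.cramer_apply _ _ _
    simp only [this]
    apply contDiffOn_matrix_det
    intro i j'
    by_cases hj : j' = j
    · subst hj
      simp only [Matrix.updateCol_apply, if_pos rfl]
      exact F.g_contDiffOn _ _
    · simp only [Matrix.updateCol_apply, if_neg hj]
      exact F.g_contDiffOn _ _

omit hVnd in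
/-- uniqueness of the orthogonal projection -/
theorem top_unique' (hVnd : ∀ pv ∈ F.A, ∀ w ∈ 𝒱, (∀ u ∈ 𝒱, F.g pv w u = 0) → w = 0)
    {qu : E × E} (hqu : qu ∈ F.A) {e x y : E} (hx : x ∈ 𝒱) (hy : y ∈ 𝒱)
    (hxp : ∀ u ∈ 𝒱, F.g qu (e - x) u = 0) (hyp : ∀ u ∈ 𝒱, F.g qu (e - y) u = 0) :
    x = y := by
  have := hVnd qu hqu (x - y) (Submodule.sub_mem _ hx hy) (fun u hu => by
    have h1 := hxp u hu
    have h2 := hyp u hu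
    have : F.g qu (x - y) u = F.g qu (e - y) u - F.g qu (e - x) u := by
      simp only [map_sub, LinearMap.sub_apply]
      ring
    rw [this, h1, h2, sub_zero])
  exact sub_eq_zero.1 this

theorem top_eq_topc (top : E × E → E → E)
    (htop_mem : ∀ pv ∈ F.A, ∀ e, top pv e ∈ 𝒱)
    (htop_perp : ∀ pv ∈ F.A, ∀ e, ∀ w ∈ 𝒱, F.g pv (e - top pv e) w = 0)
    {qu : E × E} (hqu : qu ∈ F.A) (e : E) : top qu e = topc F 𝒱 qu e :=
  top_unique' F 𝒱 hVnd hqu (htop_mem qu hqu e) (topc_mem F 𝒱 hVnd qu e)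
    (htop_perp qu hqu e) (topc_perp F 𝒱 hVnd hqu e)

end TopField

/-- (i) for every `(p,v) ∈ A` and `b`, the maps `e ↦ T^{(p,v)}_b e` and
`e ↦ A^{(p,v)}_b e` are `g_{(p,v)}`-skew-adjoint, map vertical vectors to
`g_{(p,v)}`-horizontal ones and `g_{(p,v)}`-horizontal vectors to vertical ones;
(ii) if `v` is vertical then `T^{(p,v)}` is symmetric on vertical vectors.
Here `Γ` is the Chern connection of `L` in the chart and `top` the vertical projection. -/
theorem stmt11 (n : ℕ)
    (F : PseudoFinslerChart (EuclideanSpace ℝ (Fin n)))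
    (Γ : EuclideanSpace ℝ (Fin n) × EuclideanSpace ℝ (Fin n) →
      EuclideanSpace ℝ (Fin n) →ₗ[ℝ] EuclideanSpace ℝ (Fin n) →ₗ[ℝ] EuclideanSpace ℝ (Fin n))
    (hΓsmooth : ∀ e h : EuclideanSpace ℝ (Fin n),
      ContDiffOn ℝ (⊤ : ℕ∞) (fun pv => Γ pv e h) F.A)
    (hΓsymm : ∀ pv ∈ F.A, ∀ e h : EuclideanSpace ℝ (Fin n), Γ pv e h = Γ pv h e)
    (hΓcompat : ∀ pv ∈ F.A, ∀ e h b : EuclideanSpace ℝ (Fin n),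
      fderiv ℝ (fun q => F.g (q, pv.2) h b) pv.1 e
        = F.g pv (Γ pv e h) b + F.g pv h (Γ pv e b)
          + 2 * F.Cartan pv h b (Γ pv e pv.2))
    (𝒱 : Submodule ℝ (EuclideanSpace ℝ (Fin n)))
    (hVnd : ∀ pv ∈ F.A, ∀ w ∈ 𝒱, (∀ u ∈ 𝒱, F.g pv w u = 0) → w = 0)
    (top : EuclideanSpace ℝ (Fin n) × EuclideanSpace ℝ (Fin n) →
      EuclideanSpace ℝ (Fin n) → EuclideanSpace ℝ (Fin n))
    (htop_mem : ∀ pv ∈ F.A, ∀ e, top pv e ∈ 𝒱)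
    (htop_perp : ∀ pv ∈ F.A, ∀ e, ∀ w ∈ 𝒱, F.g pv (e - top pv e) w = 0) :
    ∀ pv ∈ F.A,
      (∀ b : EuclideanSpace ℝ (Fin n),
        (∀ e h : EuclideanSpace ℝ (Fin n),
          F.g pv (oneillT Γ top pv b e) h = - F.g pv e (oneillT Γ top pv b h)) ∧
        (∀ e h : EuclideanSpace ℝ (Fin n),
          F.g pv (oneillA Γ top pv b e) h = - F.g pv e (oneillA Γ top pv b h)) ∧
        (∀ w ∈ 𝒱, ∀ u ∈ 𝒱, F.g pv (oneillT Γ top pv b w) u = 0) ∧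
        (∀ x : EuclideanSpace ℝ (Fin n),
          (∀ w ∈ 𝒱, F.g pv x w = 0) → oneillT Γ top pv b x ∈ 𝒱) ∧
        (∀ w ∈ 𝒱, ∀ u ∈ 𝒱, F.g pv (oneillA Γ top pv b w) u = 0) ∧
        (∀ x : EuclideanSpace ℝ (Fin n),
          (∀ w ∈ 𝒱, F.g pv x w = 0) → oneillA Γ top pv b x ∈ 𝒱)) ∧
      (pv.2 ∈ 𝒱 → ∀ u ∈ 𝒱, ∀ w ∈ 𝒱,
        oneillT Γ top pv u w = oneillT Γ top pv w u) := by
  intro pv hpv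
  classical
  have hgs : ∀ e h : EuclideanSpace ℝ (Fin n), F.g pv e h = F.g pv h e :=
    fun e h => F.g_symm pv hpv e h
  have gnd := F.g_nondeg pv hpv
  have eqz : ∀ a b : EuclideanSpace ℝ (Fin n),
      (∀ y, F.g pv a y = F.g pv b y) → a = b := by
    intro a b hab
    refine sub_eq_zero.1 (gnd _ fun y => ?_)
    have := hab y
    simp only [map_sub, LinearMap.sub_apply]
    linarith
  have p2 : ∀ w ∈ 𝒱, top pv w = w := by
    intro w hw
    have h0 := hVnd pv hpv (w - top pv w)
      (Submodule.sub_mem _ hw (htop_mem pv hpv w)) (fun u hu => htop_perp pv hpv w u hu)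
    exact (sub_eq_zero.1 h0).symm
  have p3 : ∀ a y, F.g pv (top pv a) y = F.g pv a (top pv y) := by
    intro a y
    have hA : F.g pv (top pv a) (y - top pv y) = 0 := by
      rw [hgs]
      exact htop_perp pv hpv y _ (htop_mem pv hpv a)
    have hB : F.g pv (a - top pv a) (top pv y) = 0 := htop_perp pv hpv a _ (htop_mem pv hpv y)
    simp only [map_sub, LinearMap.sub_apply] at hA hB
    linarith
  have p4 : ∀ x, (∀ w ∈ 𝒱, F.g pv x w = 0) → top pv x = 0 := by
    intro x hx
    exact hVnd pv hpv _ (htop_mem pv hpv x) (fun u hu => by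
      rw [p3 x u]; exact hx _ (htop_mem pv hpv u))
  -- differentiability of the projection fields
  have htopceq : ∀ qu ∈ F.A, ∀ e, top qu e = topc F 𝒱 qu e :=
    fun qu hqu e => top_eq_topc F 𝒱 hVnd top htop_mem htop_perp hqu e
  have hevbase : ∀ᶠ q in 𝓝 pv.1, ((q, pv.2) : EuclideanSpace ℝ (Fin n) × _) ∈ F.A := by
    have hc : ContinuousAt
        (fun q : EuclideanSpace ℝ (Fin n) => ((q, pv.2) : EuclideanSpace ℝ (Fin n) × _)) pv.1 :=
      by fun_prop
    exact hc.eventually_mem (by simpa using F.A_open.mem_nhds hpv)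
  have htopdb : ∀ e, DifferentiableAt ℝ (fun q => top (q, pv.2) e) pv.1 := by
    intro e
    have hd : DifferentiableAt ℝ (fun q => topc F 𝒱 (q, pv.2) e) pv.1 :=
      diffAt_comp_base (contDiffOn_open_diffAt (topc_contDiffOn F 𝒱 hVnd e) F.A_open hpv)
    refine (Filter.EventuallyEq.differentiableAt_iff ?_).2 hd
    filter_upwards [hevbase] with q hq
    exact htopceq _ hq e
  have htopdf : ∀ z e, DifferentiableAt ℝ (fun t : ℝ => top (pv.1, pv.2 + t • z) e) 0 := by
    intro z e
    have hd : DifferentiableAt ℝ (fun t : ℝ => topc F 𝒱 (pv.1, pv.2 + t • z) e) 0 :=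
      diffAt_comp_fiber (contDiffOn_open_diffAt (topc_contDiffOn F 𝒱 hVnd e) F.A_open hpv) z
    refine (Filter.EventuallyEq.differentiableAt_iff ?_).2 hd
    filter_upwards [eventually_line_mem F.A_open hpv z] with t ht
    exact htopceq _ ht e
  -- covariant derivatives of constant and horizontal fields
  have hconstcov : ∀ (c u' : EuclideanSpace ℝ (Fin n)),
      covDeriv Γ (fun _ => u') pv c = Γ pv c u' := by
    intro c u'
    simp [covDeriv, fiberDeriv]
  have hcov_h : ∀ c e, covDeriv Γ (fun qu => e - top qu e) pv c
      = Γ pv c e - covDeriv Γ (fun qu => top qu e) pv c := by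
    intro c e
    simp only [covDeriv, fiberDeriv]
    have h1 : fderiv ℝ (fun q => e - top (q, pv.2) e) pv.1 c
        = - fderiv ℝ (fun q => top (q, pv.2) e) pv.1 c := by
      rw [fderiv_fun_sub (differentiableAt_const e) (htopdb e)]
      simp
    have h2 : deriv (fun t : ℝ => e - top (pv.1, pv.2 + t • Γ pv c pv.2) e) 0
        = - deriv (fun t : ℝ => top (pv.1, pv.2 + t • Γ pv c pv.2) e) 0 := by
      rw [deriv_fun_sub (differentiableAt_const e) (htopdf _ e)]
      simp
    rw [h1, h2, map_sub]
    abel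
  -- first metric identity
  have hF1 : ∀ c e u', u' ∈ 𝒱 →
      F.g pv (covDeriv Γ (fun qu => top qu e) pv c) u'
        = F.g pv (Γ pv c e) u' + F.g pv e (Γ pv c u')
          - F.g pv (top pv e) (Γ pv c u') := by
    intro c e u' hu'
    have hmc := F.metric_compat Γ hΓcompat hpv (fun qu => top qu e) (fun _ => u') c
      (htopdb e) (htopdf _ e) (differentiableAt_const u') (differentiableAt_const u')
    beta_reduce at hmc
    rw [hconstcov c u'] at hmc
    have hDev : (fun q => F.g (q, pv.2) (top (q, pv.2) e) u')
        =ᶠ[𝓝 pv.1] fun q => F.g (q, pv.2) e u' := by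
      filter_upwards [hevbase] with q hq
      have := htop_perp (q, pv.2) hq e u' hu'
      simp only [map_sub, LinearMap.sub_apply] at this
      linarith
    have hFev : (fun t : ℝ => F.g (pv.1, pv.2 + t • Γ pv c pv.2)
          (top (pv.1, pv.2 + t • Γ pv c pv.2) e) u')
        =ᶠ[𝓝 (0:ℝ)] fun t : ℝ => F.g (pv.1, pv.2 + t • Γ pv c pv.2) e u' := by
      filter_upwards [eventually_line_mem F.A_open hpv (Γ pv c pv.2)] with t ht
      have := htop_perp _ ht e u' hu'
      simp only [map_sub, LinearMap.sub_apply] at this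
      linarith
    rw [hDev.fderiv_eq, hFev.deriv_eq, hΓcompat pv hpv c e u',
      F.cartan_deriv hpv (Γ pv c pv.2) e u',
      F.cartan_rot hpv (Γ pv c pv.2) e u'] at hmc
    linarith
  -- second metric identity
  have hF2 : ∀ c e h',
      F.g pv (covDeriv Γ (fun qu => top qu e) pv c) h'
        - F.g pv (covDeriv Γ (fun qu => top qu e) pv c) (top pv h')
      = F.g pv (top pv e) (covDeriv Γ (fun qu => top qu h') pv c)
        - F.g pv (top pv e) (Γ pv c h') := by
    intro c e h'
    have hmc := F.metric_compat Γ hΓcompat hpv (fun qu => top qu e)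
      (fun qu => h' - top qu h') c (htopdb e) (htopdf _ e)
      ((differentiableAt_const h').sub (htopdb h'))
      ((differentiableAt_const h').sub (htopdf _ h'))
    beta_reduce at hmc
    rw [hcov_h c h'] at hmc
    have hDev : (fun q => F.g (q, pv.2) (top (q, pv.2) e) (h' - top (q, pv.2) h'))
        =ᶠ[𝓝 pv.1] fun _ => (0:ℝ) := by
      filter_upwards [hevbase] with q hq
      rw [F.g_symm _ hq]
      exact htop_perp _ hq h' _ (htop_mem _ hq e)
    have hFev : (fun t : ℝ => F.g (pv.1, pv.2 + t • Γ pv c pv.2)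
          (top (pv.1, pv.2 + t • Γ pv c pv.2) e)
          (h' - top (pv.1, pv.2 + t • Γ pv c pv.2) h'))
        =ᶠ[𝓝 (0:ℝ)] fun _ => (0:ℝ) := by
      filter_upwards [eventually_line_mem F.A_open hpv (Γ pv c pv.2)] with t ht
      rw [F.g_symm _ ht]
      exact htop_perp _ ht h' _ (htop_mem _ ht e)
    rw [hDev.fderiv_eq, hFev.deriv_eq] at hmc
    simp only [fderiv_fun_const, Pi.zero_apply, ContinuousLinearMap.zero_apply, deriv_const,
      sub_zero] at hmc
    simp only [map_sub, LinearMap.sub_apply] at hmc ⊢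
    linarith
  -- the master formula for χ
  have hmaster : ∀ c e y, F.g pv (chiTen Γ top pv c e) y
      = F.g pv (top pv e) (covDeriv Γ (fun qu => top qu y) pv c)
        - F.g pv (top pv e) (Γ pv c y)
        - F.g pv e (Γ pv c (top pv y)) + F.g pv (top pv e) (Γ pv c (top pv y)) := by
    intro c e y
    have hchi : F.g pv (chiTen Γ top pv c e) y
        = F.g pv (top pv (Γ pv c e - covDeriv Γ (fun qu => top qu e) pv c)) y
          + F.g pv (covDeriv Γ (fun qu => top qu e) pv c) y
          - F.g pv (top pv (covDeriv Γ (fun qu => top qu e) pv c)) y := by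
      rw [chiTen, hcov_h c e]
      simp only [map_add, map_sub, LinearMap.add_apply, LinearMap.sub_apply]
      ring
    rw [hchi, p3 (Γ pv c e - covDeriv Γ (fun qu => top qu e) pv c) y,
      p3 (covDeriv Γ (fun qu => top qu e) pv c) y]
    have h2 := hF2 c e y
    have h1 := hF1 c e (top pv y) (htop_mem pv hpv y)
    simp only [map_sub, LinearMap.sub_apply] at h1 h2 ⊢
    linarith
  -- generic consequences
  have hskew : ∀ c e y, F.g pv (chiTen Γ top pv c e) y
      = - F.g pv e (chiTen Γ top pv c y) := by
    intro c e y
    have h1 := hmaster c e y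
    have h2 := hmaster c y e
    have h3 := hF1 c y (top pv e) (htop_mem pv hpv e)
    have h4 := hF1 c e (top pv y) (htop_mem pv hpv y)
    have h5 : F.g pv e (chiTen Γ top pv c y) = F.g pv (chiTen Γ top pv c y) e := hgs _ _
    have s1 : F.g pv (Γ pv c y) (top pv e) = F.g pv (top pv e) (Γ pv c y) := hgs _ _
    have s2 : F.g pv (Γ pv c e) (top pv y) = F.g pv (top pv y) (Γ pv c e) := hgs _ _
    have s3 : F.g pv (covDeriv Γ (fun qu => top qu y) pv c) (top pv e)
        = F.g pv (top pv e) (covDeriv Γ (fun qu => top qu y) pv c) := hgs _ _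
    have s4 : F.g pv (covDeriv Γ (fun qu => top qu e) pv c) (top pv y)
        = F.g pv (top pv y) (covDeriv Γ (fun qu => top qu e) pv c) := hgs _ _
    have s5 : F.g pv (top pv y) (Γ pv c e) = F.g pv (Γ pv c e) (top pv y) := hgs _ _
    linarith
  have hvh : ∀ (c : EuclideanSpace ℝ (Fin n)), ∀ w ∈ 𝒱, ∀ u ∈ 𝒱,
      F.g pv (chiTen Γ top pv c w) u = 0 := by
    intro c w hw u hu
    have h1 := hmaster c w u
    rw [p2 w hw, p2 u hu] at h1
    have h3 := hF1 c u w hw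
    rw [p2 u hu] at h3
    have s1 : F.g pv w (covDeriv Γ (fun qu => top qu u) pv c)
        = F.g pv (covDeriv Γ (fun qu => top qu u) pv c) w := hgs _ _
    have s2 : F.g pv (Γ pv c u) w = F.g pv w (Γ pv c u) := hgs _ _
    linarith
  have hhv : ∀ (c x : EuclideanSpace ℝ (Fin n)), (∀ w ∈ 𝒱, F.g pv x w = 0) →
      chiTen Γ top pv c x ∈ 𝒱 := by
    intro c x hx
    have hPx : top pv x = 0 := p4 x hx
    have hz : covDeriv Γ (fun qu => top qu x) pv c
        - top pv (covDeriv Γ (fun qu => top qu x) pv c) = 0 := by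
      apply gnd
      intro y
      have h2 := hF2 c x y
      rw [hPx] at h2
      have hp3 := p3 (covDeriv Γ (fun qu => top qu x) pv c) y
      simp only [map_sub, LinearMap.sub_apply, map_zero, LinearMap.zero_apply] at h2 ⊢
      linarith
    rw [chiTen, hz, add_zero]
    exact htop_mem pv hpv _
  refine ⟨fun b => ⟨?_, ?_, ?_, ?_, ?_, ?_⟩, ?_⟩
  · exact fun e h => hskew (top pv b) e h
  · exact fun e h => hskew (b - top pv b) e h
  · exact fun w hw u hu => hvh (top pv b) w hw u hu
  · exact fun x hx => hhv (top pv b) x hx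
  · exact fun w hw u hu => hvh (b - top pv b) w hw u hu
  · exact fun x hx => hhv (b - top pv b) x hx
  · intro hv u hu w hw
    simp only [oneillT]
    rw [p2 u hu, p2 w hw]
    apply eqz
    intro y
    have h1 := hmaster u w y
    have h2 := hmaster w u y
    rw [p2 w hw] at h1
    rw [p2 u hu] at h2
    have h3 := hF1 u y w hw
    have h4 := hF1 w y u hu
    have hsymuw : Γ pv u w = Γ pv w u := hΓsymm pv hpv u w
    rw [hsymuw] at h3
    have s1 : F.g pv w (covDeriv Γ (fun qu => top qu y) pv u)
        = F.g pv (covDeriv Γ (fun qu => top qu y) pv u) w := hgs _ _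
    have s2 : F.g pv u (covDeriv Γ (fun qu => top qu y) pv w)
        = F.g pv (covDeriv Γ (fun qu => top qu y) pv w) u := hgs _ _
    have s3 : F.g pv (Γ pv u y) w = F.g pv w (Γ pv u y) := hgs _ _
    have s4 : F.g pv (Γ pv w y) u = F.g pv u (Γ pv w y) := hgs _ _
    linarith
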